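/- arXiv:1401.2415 — 2 statements merged into one kernel-verified Lean document; each statement's English description precedes it below -/
import Mathlib

section
/- Let n ≥ 1 be an integer, θ ∈ (0, π], and A > 0. For all α_1, …, α_n ∈ (0, π/2) with Σ_{j=1}^n α_j = θ and all R_1, …, R_n > 0 with Σ_{j=1}^n R_j² sin α_j cos α_j = A, one has Σ_{j=1}^n (R_j³ cos³α_j / 3) ∫_{−α_j}^{α_j} dt/cos³t ≥ (A^{3/2}/3) ( ln tan(θ/(2n) + π/4) + tan(θ/n)/cos(θ/n) ) (n tan³(θ/n))^{−1/2}, with equality if and only if α_j = θ/n and R_j = (2A/(n sin(2θ/n)))^{1/2} for all j. -/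
/-!
Write `a = R² sin α cos α` for the area of a basic triangle and `J(α) = ∫_{-α}^{α} sec³`. Its cost
`R³ cos³α J(α) / 3` equals `a √(a / P α) / 3` with `P α = tan³α / J(α)²`, and `P` is strictly
concave on `(0, π/2)`, so Jensen gives `∑ P(α_j) ≤ n P(θ/n)`. Weighted AM-GM,
`x² y ≤ (2x³ + y³)/3` at `x = √(a/p)`, reads `a √(a/p) ≥ 3/2 y a - y³ p / 2` with equality iff
`√(a/p) = y`. Summed over `j` with `y = √(A / (n P(θ/n)))`, it bounds the total cost below by
`A y / 3`, with equality exactly when every `α_j = θ/n` and every `a_j = A/n`.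
-/

open Real Set Finset

lemma mul_sqrt_div_eq {a p : ℝ} (y : ℝ) (ha : 0 ≤ a) (hp : 0 < p) :
    a * √(a / p) =
      3 / 2 * y * a - y ^ 3 * p / 2 + p * (√(a / p) + y / 2) * (√(a / p) - y) ^ 2 := by
  have ha' : a = p * √(a / p) ^ 2 := by
    rw [sq_sqrt (div_nonneg ha hp.le)]; field_simp
  linear_combination (√(a / p) - 3 / 2 * y) * ha'

section ConcaveAllocation

variable {ι : Type*} [Fintype ι] [Nonempty ι] {S : Set ℝ} {P : ℝ → ℝ} {α a : ι → ℝ} {θ A : ℝ}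

lemma Convex.sum_div_card_mem (hS : Convex ℝ S) (hα : ∀ i, α i ∈ S) :
    (∑ i, α i) / Fintype.card ι ∈ S := by
  have := hS.sum_mem (t := univ) (w := fun _ ↦ (Fintype.card ι : ℝ)⁻¹) (fun _ _ ↦ by positivity)
    (by simp) (fun i _ ↦ hα i)
  simpa [smul_eq_mul, ← mul_sum, div_eq_inv_mul] using this

lemma StrictConcaveOn.sum_le_card_mul (hP : StrictConcaveOn ℝ S P) (hα : ∀ i, α i ∈ S)
    (hθ : ∑ i, α i = θ) :
    ∑ i, P (α i) ≤ Fintype.card ι * P (θ / Fintype.card ι) ∧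
      (∑ i, P (α i) = Fintype.card ι * P (θ / Fintype.card ι) ↔
        ∀ i, α i = θ / Fintype.card ι) := by
  set n : ℝ := (Fintype.card ι : ℝ)
  have hn : 0 < n := by positivity
  have hw : ∑ _i : ι, n⁻¹ = 1 := by simp [n]
  have hmean : ∑ i, n⁻¹ • α i = θ / n := by simp [smul_eq_mul, ← mul_sum, hθ, div_eq_inv_mul]
  have hsum : ∑ i, n⁻¹ • P (α i) = n⁻¹ * ∑ i, P (α i) := by simp [smul_eq_mul, ← mul_sum]
  have jensen := hP.concaveOn.le_map_sum (t := univ) (fun _ _ ↦ by positivity) hw (fun i _ ↦ hα i)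
  have jensen_eq := hP.map_sum_eq_iff_of_pos (t := univ) (fun _ _ ↦ by positivity) hw
    (fun i _ ↦ hα i)
  rw [hmean, hsum] at jensen jensen_eq
  refine ⟨by rwa [inv_mul_le_iff₀ hn] at jensen, ?_⟩
  simp only [Finset.mem_univ, forall_const] at jensen_eq
  have hconst : (∀ j k, α j = α k) ↔ ∀ i, α i = θ / n := by
    refine ⟨fun h i ↦ ?_, fun h j k ↦ by rw [h j, h k]⟩
    rw [eq_div_iff hn.ne', ← hθ, mul_comm]
    simp [n, sum_congr rfl fun j _ ↦ h j i]
  rw [← hconst, ← jensen_eq, eq_inv_mul_iff_mul_eq₀ hn.ne', eq_comm]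

theorem StrictConcaveOn.mul_sqrt_div_le_sum (hP : StrictConcaveOn ℝ S P)
    (hPpos : ∀ x ∈ S, 0 < P x) (hα : ∀ i, α i ∈ S) (hθ : ∑ i, α i = θ) (ha : ∀ i, 0 < a i)
    (hA : ∑ i, a i = A) :
    A * √(A / (Fintype.card ι * P (θ / Fintype.card ι))) ≤ ∑ i, a i * √(a i / P (α i)) ∧
      (∑ i, a i * √(a i / P (α i)) = A * √(A / (Fintype.card ι * P (θ / Fintype.card ι))) ↔
        ∀ i, α i = θ / Fintype.card ι ∧ a i = A / Fintype.card ι) := by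
  set n : ℝ := (Fintype.card ι : ℝ)
  have hn : 0 < n := by positivity
  have hPc : 0 < P (θ / n) := hPpos _ (hθ ▸ hP.1.sum_div_card_mem hα)
  have hApos : 0 < A := hA ▸ sum_pos (fun i _ ↦ ha i) univ_nonempty
  set y := √(A / (n * P (θ / n)))
  have hy : 0 < y := by positivity
  have hyA : y ^ 2 * (n * P (θ / n)) = A := by
    rw [sq_sqrt (by positivity)]; field_simp
  set gap : ι → ℝ := fun i ↦ P (α i) * (√(a i / P (α i)) + y / 2) * (√(a i / P (α i)) - y) ^ 2
  have hgap : ∀ i, 0 ≤ gap i := fun i ↦ by have := hPpos _ (hα i); positivity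
  have jensen := hP.sum_le_card_mul hα hθ
  have key : ∑ i, a i * √(a i / P (α i)) - A * y =
      y ^ 3 / 2 * (n * P (θ / n) - ∑ i, P (α i)) + ∑ i, gap i := by
    rw [sum_congr rfl fun i _ ↦ mul_sqrt_div_eq y (ha i).le (hPpos _ (hα i))]
    simp only [sum_add_distrib, sum_sub_distrib, ← mul_sum, ← sum_div, hA, gap]
    linear_combination (-y / 2) * hyA
  have hδ : 0 ≤ y ^ 3 / 2 * (n * P (θ / n) - ∑ i, P (α i)) :=
    mul_nonneg (by positivity) (sub_nonneg.2 jensen.1)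
  have hgap_sum : 0 ≤ ∑ i, gap i := sum_nonneg fun i _ ↦ hgap i
  refine ⟨by linarith, ?_⟩
  have gap_eq_zero (i : ι) : gap i = 0 ↔ √(a i / P (α i)) = y := by
    have := hPpos _ (hα i)
    rw [mul_eq_zero_iff_left (by positivity), pow_eq_zero_iff two_ne_zero, sub_eq_zero]
  rw [← sub_eq_zero, key, add_eq_zero_iff_of_nonneg hδ hgap_sum,
    mul_eq_zero_iff_left (by positivity), sub_eq_zero, eq_comm, jensen.2,
    sum_eq_zero_iff_of_nonneg fun i _ ↦ hgap i, forall_and]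
  refine and_congr_right fun hαc ↦ forall_congr' fun i ↦ ?_
  have := ha i
  rw [forall_prop_of_true (Finset.mem_univ i), gap_eq_zero, hαc i,
    sqrt_inj (by positivity) (by positivity), ← div_div, div_left_inj' hPc.ne']

end ConcaveAllocation

lemma cos_pos_of_nonneg_of_lt_pi_div_two {x : ℝ} (hx0 : 0 ≤ x) (hx : x < π / 2) : 0 < cos x :=
  cos_pos_of_mem_Ioo ⟨by linarith [pi_pos], hx⟩

lemma sin_pos_of_pos_of_lt_pi_div_two {x : ℝ} (hx0 : 0 < x) (hx : x < π / 2) : 0 < sin x :=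
  sin_pos_of_pos_of_lt_pi hx0 (by linarith [pi_pos])

lemma one_add_sin_ne_zero {x : ℝ} (hx : cos x ≠ 0) : 1 + sin x ≠ 0 := by
  intro h
  have : cos x ^ 2 = 0 := by nlinarith [sin_sq_add_cos_sq x]
  exact hx (pow_eq_zero_iff two_ne_zero |>.1 this)

lemma tan_div_two_add_pi_div_four (x : ℝ) : tan (x / 2 + π / 4) = (1 + sin x) / cos x := by
  set v := x / 2 + π / 4
  have hx : x = 2 * v - π / 2 := by ring
  rw [hx, sin_sub_pi_div_two, cos_sub_pi_div_two, sin_two_mul, cos_two_mul, tan_eq_sin_div_cos]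
  -- where `sin v = 0` or `cos v = 0` both sides are `0` by the convention `t / 0 = 0`
  rcases eq_or_ne (sin v) 0 with hs | hs
  · simp [hs]
  rcases eq_or_ne (cos v) 0 with hc | hc
  · simp [hc]
  field_simp
  linear_combination 2 * sin_sq_add_cos_sq v

lemma hasDerivAt_tan_div_cos {x : ℝ} (hx : cos x ≠ 0) :
    HasDerivAt (fun y ↦ tan y / cos y) ((1 + sin x ^ 2) / cos x ^ 3) x := by
  refine ((hasDerivAt_tan hx).div (hasDerivAt_cos x) hx).congr_deriv ?_
  rw [tan_eq_sin_div_cos]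
  field_simp
  ring

lemma hasDerivAt_log_one_add_sin_div_cos {x : ℝ} (hx : cos x ≠ 0) :
    HasDerivAt (fun y ↦ log ((1 + sin y) / cos y)) (1 / cos x) x := by
  have h1 := one_add_sin_ne_zero hx
  refine ((((hasDerivAt_sin x).const_add 1).div (hasDerivAt_cos x) hx).log
    (div_ne_zero h1 hx)).congr_deriv ?_
  simp only [Pi.div_apply]
  field_simp
  linear_combination sin_sq_add_cos_sq x

lemma lt_of_hasDerivAt_lt_of_eq {f g f' g' : ℝ → ℝ} {a b : ℝ} (hab : a < b)
    (hf : ∀ x ∈ Icc a b, HasDerivAt f (f' x) x) (hg : ∀ x ∈ Icc a b, HasDerivAt g (g' x) x)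
    (hlt : ∀ x ∈ Ioo a b, f' x < g' x) (ha : f a = g a) : f b < g b := by
  have hd : ∀ x ∈ Icc a b, HasDerivAt (g - f) (g' x - f' x) x :=
    fun x hx ↦ (hg x hx).sub (hf x hx)
  have hmono : StrictMonoOn (g - f) (Icc a b) :=
    strictMonoOn_of_hasDerivWithinAt_pos (convex_Icc a b)
      (fun x hx ↦ (hd x hx).continuousAt.continuousWithinAt)
      (fun x hx ↦ (hd x (interior_subset hx)).hasDerivWithinAt)
      (fun x hx ↦ sub_pos.2 (hlt x (by rwa [interior_Icc] at hx)))
  have := hmono (left_mem_Icc.2 hab.le) (right_mem_Icc.2 hab.le) hab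
  simpa only [Pi.sub_apply, ha, sub_self, sub_pos] using this

lemma sin_lt_log_one_add_sin_div_cos {x : ℝ} (hx0 : 0 < x) (hx : x < π / 2) :
    sin x < log ((1 + sin x) / cos x) := by
  refine lt_of_hasDerivAt_lt_of_eq hx0 (fun y _ ↦ hasDerivAt_sin y)
    (fun y hy ↦ hasDerivAt_log_one_add_sin_div_cos
      (cos_pos_of_nonneg_of_lt_pi_div_two hy.1 (hy.2.trans_lt hx)).ne')
    (fun y hy ↦ ?_) (by simp)
  have hc := cos_pos_of_nonneg_of_lt_pi_div_two hy.1.le (hy.2.trans hx)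
  have hs := sin_pos_of_pos_of_lt_pi_div_two hy.1 (hy.2.trans hx)
  rw [lt_div_iff₀ hc]
  linear_combination sin_sq_add_cos_sq y + pow_pos hs 2

lemma log_one_add_sin_div_cos_lt_tan_div_cos {x : ℝ} (hx0 : 0 < x) (hx : x < π / 2) :
    log ((1 + sin x) / cos x) < tan x / cos x := by
  have hcos {y : ℝ} (hy : y ∈ Icc 0 x) : cos y ≠ 0 :=
    (cos_pos_of_nonneg_of_lt_pi_div_two hy.1 (hy.2.trans_lt hx)).ne'
  refine lt_of_hasDerivAt_lt_of_eq hx0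
    (fun y hy ↦ hasDerivAt_log_one_add_sin_div_cos (hcos hy))
    (fun y hy ↦ hasDerivAt_tan_div_cos (hcos hy)) (fun y hy ↦ ?_) (by simp)
  have hc := cos_pos_of_nonneg_of_lt_pi_div_two hy.1.le (hy.2.trans hx)
  have hs := sin_pos_of_pos_of_lt_pi_div_two hy.1 (hy.2.trans hx)
  rw [div_lt_div_iff₀ hc (by positivity)]
  linear_combination cos y * sin_sq_add_cos_sq y + 2 * mul_pos hc (pow_pos hs 2)

noncomputable def secCubeIntegral (x : ℝ) : ℝ := tan x / cos x + log ((1 + sin x) / cos x)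

lemma hasDerivAt_secCubeIntegral {x : ℝ} (hx : cos x ≠ 0) :
    HasDerivAt secCubeIntegral (2 / cos x ^ 3) x := by
  refine ((hasDerivAt_tan_div_cos hx).add
    (hasDerivAt_log_one_add_sin_div_cos hx)).congr_deriv ?_
  field_simp
  linear_combination sin_sq_add_cos_sq x

lemma secCubeIntegral_neg {x : ℝ} (hx : cos x ≠ 0) :
    secCubeIntegral (-x) = -secCubeIntegral x := by
  have hinv : (1 - sin x) / cos x = ((1 + sin x) / cos x)⁻¹ := by
    rw [inv_div, div_eq_div_iff hx (one_add_sin_ne_zero hx)]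
    linear_combination -sin_sq_add_cos_sq x
  rw [secCubeIntegral, secCubeIntegral, tan_neg, sin_neg, cos_neg, ← sub_eq_add_neg, hinv,
    log_inv]
  ring

lemma integral_inv_cos_pow_three {a : ℝ} (h0 : 0 ≤ a) (ha : a < π / 2) :
    ∫ t in (-a)..a, 1 / cos t ^ 3 = secCubeIntegral a := by
  have hcos : ∀ t ∈ uIcc (-a) a, cos t ≠ 0 := fun t ht ↦ by
    rw [Set.uIcc_of_le (by linarith)] at ht
    exact (cos_pos_of_mem_Ioo ⟨by linarith [ht.1], by linarith [ht.2]⟩).ne'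
  have hderiv : ∀ t ∈ uIcc (-a) a,
      HasDerivAt (fun y ↦ secCubeIntegral y / 2) (1 / cos t ^ 3) t :=
    fun t ht ↦ ((hasDerivAt_secCubeIntegral (hcos t ht)).div_const 2).congr_deriv (by ring)
  have hint : IntervalIntegrable (fun t ↦ 1 / cos t ^ 3) MeasureTheory.volume (-a) a :=
    (continuousOn_const.div (continuousOn_cos.pow 3) fun t ht ↦ pow_ne_zero _ (hcos t ht))
      |>.intervalIntegrable
  rw [intervalIntegral.integral_eq_sub_of_hasDerivAt hderiv hint,
    secCubeIntegral_neg (hcos a right_mem_uIcc)]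
  ring

lemma secCubeIntegral_pos {x : ℝ} (hx0 : 0 < x) (hx : x < π / 2) : 0 < secCubeIntegral x := by
  have := sin_lt_log_one_add_sin_div_cos hx0 hx
  have := sin_pos_of_pos_of_lt_pi_div_two hx0 hx
  have : 0 < tan x / cos x := div_pos (tan_pos_of_pos_of_lt_pi_div_two hx0 hx)
    (cos_pos_of_nonneg_of_lt_pi_div_two hx0.le hx)
  unfold secCubeIntegral
  linarith

lemma strictConcaveOn_of_hasDerivAt2_neg {D : Set ℝ} (hDo : IsOpen D) (hD : Convex ℝ D)
    {f f' f'' : ℝ → ℝ} (hf : ∀ x ∈ D, HasDerivAt f (f' x) x)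
    (hf' : ∀ x ∈ D, HasDerivAt f' (f'' x) x) (hf'' : ∀ x ∈ D, f'' x < 0) :
    StrictConcaveOn ℝ D f := by
  have hanti : StrictAntiOn f' D := strictAntiOn_of_hasDerivWithinAt_neg hD
    (fun x hx ↦ (hf' x hx).continuousAt.continuousWithinAt)
    (fun x hx ↦ (hf' x (interior_subset hx)).hasDerivWithinAt)
    (fun x hx ↦ hf'' x (interior_subset hx))
  refine StrictAntiOn.strictConcaveOn_of_deriv hD
    (fun x hx ↦ (hf x hx).continuousAt.continuousWithinAt) ?_
  rw [hDo.interior_eq]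
  exact hanti.congr fun x hx ↦ (hf x hx).deriv.symm

noncomputable def shapeFactor (x : ℝ) : ℝ := tan x ^ 3 / secCubeIntegral x ^ 2

lemma hasDerivAt_shapeFactor {x : ℝ} (hx0 : 0 < x) (hx : x < π / 2) :
    HasDerivAt shapeFactor
      (tan x ^ 2 * (3 * secCubeIntegral x - 4 * tan x / cos x) /
        (cos x ^ 2 * secCubeIntegral x ^ 3)) x := by
  have hc := (cos_pos_of_nonneg_of_lt_pi_div_two hx0.le hx).ne'
  have hJ := (secCubeIntegral_pos hx0 hx).ne'
  refine (((hasDerivAt_tan hc).pow 3).div ((hasDerivAt_secCubeIntegral hc).pow 2)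
    (pow_ne_zero 2 hJ)).congr_deriv ?_
  simp only [Pi.pow_apply]
  field_simp
  ring

lemma hasDerivAt_shapeFactor_deriv {x : ℝ} (hx0 : 0 < x) (hx : x < π / 2) :
    HasDerivAt
      (fun y ↦ tan y ^ 2 * (3 * secCubeIntegral y - 4 * tan y / cos y) /
        (cos y ^ 2 * secCubeIntegral y ^ 3))
      (6 * tan x * (secCubeIntegral x - 2 * tan x / cos x) *
        ((1 / cos x ^ 2 + tan x ^ 2) * secCubeIntegral x - 2 * tan x / cos x ^ 3) /
        (cos x ^ 2 * secCubeIntegral x ^ 4)) x := by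
  have hc := (cos_pos_of_nonneg_of_lt_pi_div_two hx0.le hx).ne'
  have hJ := (secCubeIntegral_pos hx0 hx).ne'
  have ht := hasDerivAt_tan hc
  have hJ' := hasDerivAt_secCubeIntegral hc
  refine ((((ht.pow 2).mul ((hJ'.const_mul 3).sub
    ((ht.const_mul 4).div (hasDerivAt_cos x) hc))).div
    (((hasDerivAt_cos x).pow 2).mul (hJ'.pow 3))
    (mul_ne_zero (pow_ne_zero 2 hc) (pow_ne_zero 3 hJ)))).congr_deriv ?_
  simp only [Pi.pow_apply, Pi.mul_apply, Pi.sub_apply, Pi.div_apply]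
  -- after `sin x = tan x * cos x`, a rational identity in `tan x`, `cos x`, `secCubeIntegral x`
  rw [← tan_mul_cos hc]
  field_simp
  ring

lemma shapeFactor_deriv2_neg {x : ℝ} (hx0 : 0 < x) (hx : x < π / 2) :
    6 * tan x * (secCubeIntegral x - 2 * tan x / cos x) *
        ((1 / cos x ^ 2 + tan x ^ 2) * secCubeIntegral x - 2 * tan x / cos x ^ 3) /
        (cos x ^ 2 * secCubeIntegral x ^ 4) < 0 := by
  have hc := cos_pos_of_nonneg_of_lt_pi_div_two hx0.le hx
  have hs := sin_pos_of_pos_of_lt_pi_div_two hx0 hx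
  have ht := tan_pos_of_pos_of_lt_pi_div_two hx0 hx
  have hJ := secCubeIntegral_pos hx0 hx
  have hlog_lt := log_one_add_sin_div_cos_lt_tan_div_cos hx0 hx
  have hlog_gt := sin_lt_log_one_add_sin_div_cos hx0 hx
  have h1 : secCubeIntegral x - 2 * tan x / cos x < 0 := by
    rw [mul_div_assoc]; unfold secCubeIntegral; linarith
  have h2 : 0 < (1 / cos x ^ 2 + tan x ^ 2) * secCubeIntegral x - 2 * tan x / cos x ^ 3 := by
    have key : (1 / cos x ^ 2 + tan x ^ 2) * secCubeIntegral x - 2 * tan x / cos x ^ 3 =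
        (1 / cos x ^ 2 + tan x ^ 2) * (log ((1 + sin x) / cos x) - sin x) +
          tan x ^ 2 * sin x := by
      unfold secCubeIntegral
      rw [tan_eq_sin_div_cos]
      field_simp
      linear_combination sin x * sin_sq_add_cos_sq x
    have : 0 < log ((1 + sin x) / cos x) - sin x := by linarith
    rw [key]
    positivity
  exact div_neg_of_neg_of_pos (mul_neg_of_neg_of_pos (mul_neg_of_pos_of_neg (by positivity) h1) h2)
    (by positivity)

lemma strictConcaveOn_shapeFactor : StrictConcaveOn ℝ (Ioo 0 (π / 2)) shapeFactor :=
  strictConcaveOn_of_hasDerivAt2_neg isOpen_Ioo (convex_Ioo _ _)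
    (fun _ hx ↦ hasDerivAt_shapeFactor hx.1 hx.2)
    (fun _ hx ↦ hasDerivAt_shapeFactor_deriv hx.1 hx.2)
    (fun _ hx ↦ shapeFactor_deriv2_neg hx.1 hx.2)

lemma shapeFactor_pos {x : ℝ} (hx : x ∈ Ioo 0 (π / 2)) : 0 < shapeFactor x := by
  have := tan_pos_of_pos_of_lt_pi_div_two hx.1 hx.2
  have := secCubeIntegral_pos hx.1 hx.2
  unfold shapeFactor
  positivity

lemma pow_three_mul_integral_inv_cos_pow_three {R x : ℝ} (hR : 0 < R) (hx0 : 0 < x)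
    (hx : x < π / 2) :
    R ^ 3 * cos x ^ 3 / 3 * ∫ t in (-x)..x, 1 / cos t ^ 3 =
      R ^ 2 * sin x * cos x * √(R ^ 2 * sin x * cos x / shapeFactor x) / 3 := by
  have hc := cos_pos_of_nonneg_of_lt_pi_div_two hx0.le hx
  have hs := sin_pos_of_pos_of_lt_pi_div_two hx0 hx
  have hJ := secCubeIntegral_pos hx0 hx
  have hsq : R ^ 2 * sin x * cos x / shapeFactor x =
      (R * cos x ^ 2 * secCubeIntegral x / sin x) ^ 2 := by
    unfold shapeFactor
    rw [tan_eq_sin_div_cos]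
    field_simp
  rw [integral_inv_cos_pow_three hx0.le hx, hsq, sqrt_sq (by positivity)]
  field_simp

lemma rpow_mul_secCubeIntegral_eq {A n x : ℝ} (hA : 0 ≤ A) (hn : 0 < n) (hx0 : 0 < x)
    (hx : x < π / 2) :
    A ^ ((3 : ℝ) / 2) / 3 * (log (tan (x / 2 + π / 4)) + tan x / cos x) *
        (n * tan x ^ 3) ^ (-(1 : ℝ) / 2) =
      A * √(A / (n * shapeFactor x)) / 3 := by
  have ht := tan_pos_of_pos_of_lt_pi_div_two hx0 hx
  have hJ := secCubeIntegral_pos hx0 hx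
  have hJsum : log (tan (x / 2 + π / 4)) + tan x / cos x = secCubeIntegral x := by
    rw [tan_div_two_add_pi_div_four, secCubeIntegral, add_comm]
  have hpow : A ^ ((3 : ℝ) / 2) = A * √A := by
    rw [show (3 : ℝ) / 2 = 1 + 1 / 2 by norm_num, rpow_add' hA (by norm_num), rpow_one,
      sqrt_eq_rpow]
  have hinv : (n * tan x ^ 3) ^ (-(1 : ℝ) / 2) = (√(n * tan x ^ 3))⁻¹ := by
    rw [neg_div, rpow_neg (by positivity), sqrt_eq_rpow]
  have hsqrt : √(A / (n * shapeFactor x)) = √A * secCubeIntegral x / √(n * tan x ^ 3) := by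
    rw [show A / (n * shapeFactor x) = A * secCubeIntegral x ^ 2 / (n * tan x ^ 3) by
        unfold shapeFactor; field_simp,
      sqrt_div' _ (by positivity), sqrt_mul hA, sqrt_sq hJ.le]
  rw [hJsum, hpow, hinv, hsqrt]
  field_simp

lemma sq_mul_sin_mul_cos_eq_div_iff {R n x A : ℝ} (hR : 0 < R) (hn : 0 < n) (hx0 : 0 < x)
    (hx : x < π / 2) :
    R ^ 2 * sin x * cos x = A / n ↔ R = (2 * A / (n * sin (2 * x))) ^ ((1 : ℝ) / 2) := by
  have hc := cos_pos_of_nonneg_of_lt_pi_div_two hx0.le hx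
  have hs := sin_pos_of_pos_of_lt_pi_div_two hx0 hx
  rw [← sqrt_eq_rpow, @eq_comm _ R, sqrt_eq_iff_mul_self_eq_of_pos hR, sin_two_mul,
    eq_div_iff hn.ne', eq_div_iff (by positivity : n * (2 * sin x * cos x) ≠ 0)]
  constructor <;> intro h <;> linarith

theorem stmt_3_general (n : ℕ) (hn : 1 ≤ n) (θ A : ℝ)
    (α R : Fin n → ℝ) (hα : ∀ j, α j ∈ Set.Ioo 0 (π/2)) (hαsum : ∑ j, α j = θ)
    (hR : ∀ j, 0 < R j) (hRsum : ∑ j, R j ^ 2 * sin (α j) * cos (α j) = A) :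
    (A ^ ((3:ℝ)/2) / 3) * (log (tan (θ/(2*n) + π/4)) + tan (θ/n) / cos (θ/n)) *
        ((n : ℝ) * tan (θ/n) ^ 3) ^ (-(1:ℝ)/2)
      ≤ (∑ j, (R j ^ 3 * cos (α j) ^ 3 / 3) * ∫ t in (-(α j))..(α j), 1 / cos t ^ 3) ∧
    ((∑ j, (R j ^ 3 * cos (α j) ^ 3 / 3) * ∫ t in (-(α j))..(α j), 1 / cos t ^ 3)
        = (A ^ ((3:ℝ)/2) / 3) * (log (tan (θ/(2*n) + π/4)) + tan (θ/n) / cos (θ/n)) *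
          ((n : ℝ) * tan (θ/n) ^ 3) ^ (-(1:ℝ)/2)
      ↔ ∀ j, α j = θ/n ∧ R j = (2*A/(n * sin (2*θ/n))) ^ ((1:ℝ)/2)) := by
  have : Nonempty (Fin n) := ⟨⟨0, hn⟩⟩
  have hn' : (0 : ℝ) < n := by exact_mod_cast hn
  have ha (j : Fin n) : 0 < R j ^ 2 * sin (α j) * cos (α j) := by
    have := hR j
    have := sin_pos_of_pos_of_lt_pi_div_two (hα j).1 (hα j).2
    have := cos_pos_of_nonneg_of_lt_pi_div_two (hα j).1.le (hα j).2
    positivity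
  have hc : θ / n ∈ Ioo 0 (π / 2) := by
    simpa [hαsum] using (convex_Ioo (0 : ℝ) (π / 2)).sum_div_card_mem hα
  obtain ⟨hle, heq⟩ := strictConcaveOn_shapeFactor.mul_sqrt_div_le_sum
    (fun _ hx ↦ shapeFactor_pos hx) hα hαsum ha hRsum
  simp only [Fintype.card_fin] at hle heq
  rw [sum_congr rfl fun j _ ↦ pow_three_mul_integral_inv_cos_pow_three (hR j) (hα j).1 (hα j).2,
    ← sum_div, show θ / (2 * n) = θ / n / 2 by ring,
    rpow_mul_secCubeIntegral_eq (hRsum ▸ sum_nonneg fun j _ ↦ (ha j).le) hn' hc.1 hc.2,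
    div_left_inj' three_ne_zero, heq]
  refine ⟨by gcongr, forall_congr' fun j ↦ and_congr_right fun hαj ↦ ?_⟩
  rw [hαj, show 2 * θ / n = 2 * (θ / n) by ring,
    sq_mul_sin_mul_cos_eq_div_iff (hR j) hn' hc.1 hc.2]

theorem stmt_3 (n : ℕ) (hn : 1 ≤ n) (θ A : ℝ) (hθ : θ ∈ Set.Ioc 0 π) (hA : 0 < A)
    (α R : Fin n → ℝ) (hα : ∀ j, α j ∈ Set.Ioo 0 (π/2)) (hαsum : ∑ j, α j = θ)
    (hR : ∀ j, 0 < R j) (hRsum : ∑ j, R j ^ 2 * sin (α j) * cos (α j) = A) :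
    (A ^ ((3:ℝ)/2) / 3) * (log (tan (θ/(2*n) + π/4)) + tan (θ/n) / cos (θ/n)) *
        ((n : ℝ) * tan (θ/n) ^ 3) ^ (-(1:ℝ)/2)
      ≤ (∑ j, (R j ^ 3 * cos (α j) ^ 3 / 3) * ∫ t in (-(α j))..(α j), 1 / cos t ^ 3) ∧
    ((∑ j, (R j ^ 3 * cos (α j) ^ 3 / 3) * ∫ t in (-(α j))..(α j), 1 / cos t ^ 3)
        = (A ^ ((3:ℝ)/2) / 3) * (log (tan (θ/(2*n) + π/4)) + tan (θ/n) / cos (θ/n)) *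
          ((n : ℝ) * tan (θ/n) ^ 3) ^ (-(1:ℝ)/2)
      ↔ ∀ j, α j = θ/n ∧ R j = (2*A/(n * sin (2*θ/n))) ^ ((1:ℝ)/2)) :=
  stmt_3_general n hn θ A α R hα hαsum hR hRsum
end

section
/- Let f > 0, κ > 0, and r ≥ 0. For all reals N > 0, A > 0, R > 0 and α ∈ (0, π/2) satisfying N R² (sin 2α + π − 2α) = A, one has N f / A + (κ f N / A) ( (2/3) R³ cos³α ∫_{−α}^{α} dt/cos³t + (2/3)(π − 2α) R³ + 2 r R (A/N) cos α ) ≥ 3 ( κ² f³ / (4 g(∞, r)²) )^{1/3}. -/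
/-!
Write `S = regionArea α`, so that `A = N R² S`. The integral of `sec³` over `[-α, α]` is
`sin α / cos² α + gd⁻¹ α` (`gd⁻¹ α = log tan (π/4 + α/2)`), and the cost becomes `x + 2y` with
`x = f / (R² S)` and `y = κ f R P / (2 S)`, where `P = regionCost r α` is the transport cost of a
region of unit radius. AM-GM gives `x + 2y ≥ 3 (x y²)^(1/3) = 3 (κ² f³ H / 4)^(1/3)` with
`H = P² / S³`, so `N` and `R` drop out. The derivative of `H` is a positive multiple of
`stationarity r α`, which is increasing in `α`; hence `H` is minimal at its root `α*`, where
`P = (2 + 4 r cos α*) S / 3` and so `H(α*) = 1 / g(∞, r)²`.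
-/

open Real Set

noncomputable def invGudermannian (a : ℝ) : ℝ := log ((1 + sin a) / cos a)

theorem one_add_sin_pos_of_cos_ne_zero {a : ℝ} (h : cos a ≠ 0) : 0 < 1 + sin a := by
  nlinarith [sin_sq_add_cos_sq a, sq_pos_of_ne_zero h, neg_one_le_sin a, sin_le_one a]

theorem tan_pi_div_four_add_half {x : ℝ} (h : cos x ≠ 0) :
    tan (π / 4 + x / 2) = (1 + sin x) / cos x := by
  set u := π / 4 + x / 2
  have hx : x = 2 * u - π / 2 := by ring
  have hsin : sin x = sin u ^ 2 - cos u ^ 2 := by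
    rw [hx, sin_sub_pi_div_two, cos_two_mul]
    linear_combination (-1 : ℝ) * sin_sq_add_cos_sq u
  have hcos : cos x = 2 * sin u * cos u := by rw [hx, cos_sub_pi_div_two, sin_two_mul]
  have hcu : cos u ≠ 0 := fun h0 => h (by rw [hcos, h0, mul_zero])
  rw [tan_eq_sin_div_cos, div_eq_div_iff hcu h, hsin, hcos]
  linear_combination cos u * sin_sq_add_cos_sq u

theorem invGudermannian_eq_log_tan {a : ℝ} (h : cos a ≠ 0) :
    invGudermannian a = log (tan (π / 4 + a / 2)) := by
  rw [invGudermannian, tan_pi_div_four_add_half h]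

theorem invGudermannian_neg {a : ℝ} (h : cos a ≠ 0) :
    invGudermannian (-a) = -invGudermannian a := by
  have hpos := one_add_sin_pos_of_cos_ne_zero h
  rw [invGudermannian, invGudermannian, sin_neg, cos_neg, ← log_inv, inv_div]
  congr 1
  rw [div_eq_div_iff h hpos.ne']
  linear_combination (-1 : ℝ) * sin_sq_add_cos_sq a

theorem hasDerivAt_invGudermannian {a : ℝ} (h : cos a ≠ 0) :
    HasDerivAt invGudermannian (1 / cos a) a := by
  have hpos := one_add_sin_pos_of_cos_ne_zero h
  have hq := ((hasDerivAt_sin a).const_add 1).div (hasDerivAt_cos a) h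
  refine (hq.log (div_ne_zero hpos.ne' h)).congr_deriv ?_
  simp only [Pi.div_apply]
  field_simp
  linear_combination cos_sq_add_sin_sq a

theorem hasDerivAt_sec_cube_antideriv {t : ℝ} (h : cos t ≠ 0) :
    HasDerivAt (fun y => (sin y / cos y ^ 2 + invGudermannian y) / 2) (1 / cos t ^ 3) t := by
  have hd := (((hasDerivAt_sin t).div ((hasDerivAt_cos t).pow 2) (pow_ne_zero 2 h)).add
    (hasDerivAt_invGudermannian h)).div_const 2
  refine hd.congr_deriv ?_
  simp only [Pi.pow_apply, Nat.cast_ofNat]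
  field_simp
  linear_combination (2 * cos t) * sin_sq_add_cos_sq t

theorem integral_one_div_cos_pow_three {a b : ℝ} (h : ∀ t ∈ uIcc a b, cos t ≠ 0) :
    ∫ t in a..b, 1 / cos t ^ 3 =
      (sin b / cos b ^ 2 + invGudermannian b) / 2 - (sin a / cos a ^ 2 + invGudermannian a) / 2 :=
  intervalIntegral.integral_eq_sub_of_hasDerivAt
    (fun t ht => hasDerivAt_sec_cube_antideriv (h t ht))
    (ContinuousOn.intervalIntegrable fun t ht =>
      (continuousAt_const.div (continuous_cos.pow 3).continuousAt
        (pow_ne_zero 3 (h t ht))).continuousWithinAt)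

theorem integral_one_div_cos_pow_three_neg_self {α : ℝ} (h0 : 0 ≤ α) (h1 : α < π / 2) :
    ∫ t in (-α)..α, 1 / cos t ^ 3 = sin α / cos α ^ 2 + invGudermannian α := by
  have hcos : ∀ t ∈ uIcc (-α) α, cos t ≠ 0 := by
    intro t ht
    rw [uIcc_of_le (by linarith)] at ht
    exact (cos_pos_of_mem_Ioo ⟨by linarith [ht.1], by linarith [ht.2]⟩).ne'
  rw [integral_one_div_cos_pow_three hcos, sin_neg, cos_neg,
    invGudermannian_neg (hcos α right_mem_uIcc)]
  ring

noncomputable def regionArea (a : ℝ) : ℝ := sin (2 * a) + π - 2 * a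

noncomputable def regionCost (r a : ℝ) : ℝ :=
  (2 / 3) * (sin a * cos a + cos a ^ 3 * invGudermannian a + (π - 2 * a))
    + 2 * r * cos a * regionArea a

noncomputable def stationarity (r a : ℝ) : ℝ :=
  sin a - cos a ^ 2 * invGudermannian a - r * regionArea a

noncomputable def regionCostRatio (r a : ℝ) : ℝ := regionCost r a ^ 2 / regionArea a ^ 3

theorem hasDerivAt_regionArea (a : ℝ) : HasDerivAt regionArea (-(4 * sin a ^ 2)) a := by
  have h2 : HasDerivAt (fun x : ℝ => 2 * x) 2 a := by
    simpa using (hasDerivAt_id a).const_mul 2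
  refine ((((hasDerivAt_sin (2 * a)).comp a h2).add_const π).sub h2).congr_deriv ?_
  rw [cos_two_mul]
  linear_combination 4 * sin_sq_add_cos_sq a

theorem hasDerivAt_regionCost (r : ℝ) {a : ℝ} (h : cos a ≠ 0) :
    HasDerivAt (regionCost r)
      (-(2 * sin a * (sin a + cos a ^ 2 * invGudermannian a
          + r * (6 * sin a * cos a + (π - 2 * a))))) a := by
  have h2 : HasDerivAt (fun x : ℝ => π - 2 * x) (-2) a := by
    simpa using ((hasDerivAt_id a).const_mul 2).const_sub π
  have hd := ((((hasDerivAt_sin a).mul (hasDerivAt_cos a)).add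
    (((hasDerivAt_cos a).pow 3).mul (hasDerivAt_invGudermannian h))).add h2).const_mul (2 / 3)
    |>.add (((hasDerivAt_cos a).const_mul (2 * r)).mul (hasDerivAt_regionArea a))
  refine hd.congr_deriv ?_
  simp only [Pi.pow_apply, Nat.cast_ofNat, regionArea, sin_two_mul]
  field_simp
  linear_combination 2 * sin_sq_add_cos_sq a

theorem hasDerivAt_stationarity (r : ℝ) {a : ℝ} (h : cos a ≠ 0) :
    HasDerivAt (stationarity r)
      (2 * sin a * cos a * invGudermannian a + 4 * r * sin a ^ 2) a := by
  have hd := ((hasDerivAt_sin a).sub (((hasDerivAt_cos a).pow 2).mul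
    (hasDerivAt_invGudermannian h))).sub ((hasDerivAt_regionArea a).const_mul r)
  refine hd.congr_deriv ?_
  simp only [Pi.pow_apply, Nat.cast_ofNat]
  field_simp
  ring

theorem hasDerivAt_regionCostRatio (r : ℝ) {a : ℝ} (h : cos a ≠ 0) (hS : regionArea a ≠ 0) :
    HasDerivAt (regionCostRatio r)
      (4 * sin a * (π - 2 * a) * regionCost r a * stationarity r a / regionArea a ^ 4) a := by
  refine (((hasDerivAt_regionCost r h).pow 2).div ((hasDerivAt_regionArea a).pow 3)
    (pow_ne_zero 3 hS)).congr_deriv ?_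
  simp only [Pi.pow_apply, Nat.cast_ofNat]
  field_simp
  simp only [regionCost, stationarity, regionArea, sin_two_mul]
  ring

theorem regionArea_pos {a : ℝ} (h : a < π / 2) : 0 < regionArea a := by
  have hy : 0 < π - 2 * a := by linarith
  have hsin := abs_sin_lt_abs hy.ne'
  rw [abs_of_pos hy] at hsin
  rw [regionArea, ← sin_pi_sub]
  linarith [neg_abs_le (sin (π - 2 * a))]

theorem invGudermannian_nonneg {a : ℝ} (hs : 0 ≤ sin a) (hc : 0 < cos a) :
    0 ≤ invGudermannian a :=
  log_nonneg ((le_div_iff₀ hc).2 (by linarith [cos_le_one a]))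

theorem regionCost_pos {r a : ℝ} (hr : 0 ≤ r) (ha : a ∈ Ioo 0 (π / 2)) : 0 < regionCost r a := by
  have hc : 0 < cos a := cos_pos_of_mem_Ioo ⟨by linarith [pi_pos, ha.1], ha.2⟩
  have hs : 0 < sin a := sin_pos_of_pos_of_lt_pi ha.1 (by linarith [pi_pos, ha.2])
  have hL := invGudermannian_nonneg hs.le hc
  have hS := regionArea_pos ha.2
  have hπ : 0 < π - 2 * a := by linarith [ha.2]
  unfold regionCost
  positivity

theorem stationarity_monotoneOn {r : ℝ} (hr : 0 ≤ r) :
    MonotoneOn (stationarity r) (Ioo 0 (π / 2)) := by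
  have hc : ∀ x ∈ Ioo 0 (π / 2), 0 < cos x := fun x hx =>
    cos_pos_of_mem_Ioo ⟨by linarith [pi_pos, hx.1], hx.2⟩
  have hderiv := fun x (hx : x ∈ Ioo 0 (π / 2)) => hasDerivAt_stationarity r (hc x hx).ne'
  refine monotoneOn_of_hasDerivWithinAt_nonneg (convex_Ioo _ _)
    (fun x hx => (hderiv x hx).continuousAt.continuousWithinAt)
    (fun x hx => (hderiv x (interior_subset hx)).hasDerivWithinAt) (fun x hx => ?_)
  rw [interior_Ioo] at hx
  have hs : 0 < sin x := sin_pos_of_pos_of_lt_pi hx.1 (by linarith [pi_pos, hx.2])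
  have hL := invGudermannian_nonneg hs.le (hc x hx)
  have := hc x hx
  positivity

theorem isMinOn_of_hasDerivAt_of_sign {f f' : ℝ → ℝ} {a b c : ℝ} (hc : c ∈ Ioo a b)
    (hf : ∀ x ∈ Ioo a b, HasDerivAt f (f' x) x)
    (hleft : ∀ x ∈ Ioo a c, f' x ≤ 0) (hright : ∀ x ∈ Ioo c b, 0 ≤ f' x) :
    IsMinOn f (Ioo a b) c := by
  have hcont : ContinuousOn f (Ioo a b) := fun x hx => (hf x hx).continuousAt.continuousWithinAt
  have hanti : AntitoneOn f (Ioc a c) :=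
    antitoneOn_of_hasDerivWithinAt_nonpos (convex_Ioc a c)
      (hcont.mono (Ioc_subset_Ioo_right hc.2))
      (fun x hx => by
        rw [interior_Ioc] at hx
        exact (hf x ⟨hx.1, hx.2.trans hc.2⟩).hasDerivWithinAt)
      (fun x hx => by rw [interior_Ioc] at hx; exact hleft x hx)
  have hmono : MonotoneOn f (Ico c b) :=
    monotoneOn_of_hasDerivWithinAt_nonneg (convex_Ico c b)
      (hcont.mono (Ico_subset_Ioo_left hc.1))
      (fun x hx => by
        rw [interior_Ico] at hx
        exact (hf x ⟨hc.1.trans hx.1, hx.2⟩).hasDerivWithinAt)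
      (fun x hx => by rw [interior_Ico] at hx; exact hright x hx)
  intro x hx
  rcases le_total x c with h | h
  · exact hanti ⟨hx.1, h⟩ ⟨hc.1, le_rfl⟩ h
  · exact hmono ⟨le_rfl, hc.2⟩ ⟨h, hx.2⟩ h

theorem isMinOn_regionCostRatio {r c : ℝ} (hr : 0 ≤ r) (hc : c ∈ Ioo 0 (π / 2))
    (hE : stationarity r c = 0) : IsMinOn (regionCostRatio r) (Ioo 0 (π / 2)) c := by
  have hpos : ∀ x ∈ Ioo 0 (π / 2),
      0 < 4 * sin x * (π - 2 * x) * regionCost r x ∧ 0 < regionArea x ^ 4 := fun x hx =>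
    ⟨by
      have := sin_pos_of_pos_of_lt_pi hx.1 (by linarith [pi_pos, hx.2])
      have := regionCost_pos hr hx
      have : 0 < π - 2 * x := by linarith [hx.2]
      positivity, pow_pos (regionArea_pos hx.2) 4⟩
  refine isMinOn_of_hasDerivAt_of_sign hc
    (fun x hx => hasDerivAt_regionCostRatio r
      (cos_pos_of_mem_Ioo ⟨by linarith [pi_pos, hx.1], hx.2⟩).ne' (regionArea_pos hx.2).ne')
    (fun x hx => ?_) (fun x hx => ?_)
  · have hx' : x ∈ Ioo 0 (π / 2) := ⟨hx.1, hx.2.trans hc.2⟩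
    have hEx : stationarity r x ≤ 0 := hE ▸ stationarity_monotoneOn hr hx' hc hx.2.le
    exact div_nonpos_of_nonpos_of_nonneg
      (mul_nonpos_of_nonneg_of_nonpos (hpos x hx').1.le hEx) (hpos x hx').2.le
  · have hx' : x ∈ Ioo 0 (π / 2) := ⟨hc.1.trans hx.1, hx.2⟩
    have hEx : 0 ≤ stationarity r x := hE ▸ stationarity_monotoneOn hr hc hx' hx.1.le
    exact div_nonneg (mul_nonneg (hpos x hx').1.le hEx) (hpos x hx').2.le

theorem regionCostRatio_eq_of_stationarity_eq_zero {r a : ℝ} (hS : 0 < regionArea a)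
    (hE : stationarity r a = 0) :
    regionCostRatio r a = 1 / (3 * regionArea a ^ (1 / 2 : ℝ) / (2 + 4 * r * cos a)) ^ 2 := by
  have hP : regionCost r a = (2 + 4 * r * cos a) * regionArea a / 3 := by
    simp only [stationarity, regionArea, sin_two_mul] at hE
    simp only [regionCost, regionArea, sin_two_mul]
    linear_combination (-(2 / 3) * cos a) * hE
  have hsqrt : (regionArea a ^ (1 / 2 : ℝ)) ^ 2 = regionArea a := by
    rw [← rpow_natCast, ← rpow_mul hS.le]
    norm_num
  rw [regionCostRatio, hP, div_pow (3 * _), mul_pow, hsqrt, one_div, inv_div]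
  field_simp

theorem three_mul_rpow_mul_sq_le_add_two_mul {x y : ℝ} (hx : 0 ≤ x) (hy : 0 ≤ y) :
    3 * (x * y ^ 2) ^ (1 / 3 : ℝ) ≤ x + 2 * y := by
  have hamgm := geom_mean_le_arith_mean2_weighted (w₁ := 1 / 3) (w₂ := 2 / 3)
    (by norm_num) (by norm_num) hx hy (by norm_num)
  have hsplit : (x * y ^ 2) ^ (1 / 3 : ℝ) = x ^ (1 / 3 : ℝ) * y ^ (2 / 3 : ℝ) := by
    rw [mul_rpow hx (by positivity), ← rpow_natCast, ← rpow_mul hy]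
    norm_num
  linarith

theorem rpow_regionCostRatio_le_cost {f κ r N A R α : ℝ} (hf : 0 ≤ f) (hκ : 0 ≤ κ) (hr : 0 ≤ r)
    (hN : N ≠ 0) (hR : 0 < R) (hα : α ∈ Ioo 0 (π / 2))
    (hcon : N * R ^ 2 * (sin (2 * α) + π - 2 * α) = A) :
    3 * (κ ^ 2 * f ^ 3 * regionCostRatio r α / 4) ^ (1 / 3 : ℝ)
      ≤ N * f / A + κ * f * N / A *
          ((2 / 3) * R ^ 3 * cos α ^ 3 * (∫ t in (-α)..α, 1 / cos t ^ 3)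
            + (2 / 3) * (π - 2 * α) * R ^ 3 + 2 * r * R * (A / N) * cos α) := by
  have hc : cos α ≠ 0 := (cos_pos_of_mem_Ioo ⟨by linarith [pi_pos, hα.1], hα.2⟩).ne'
  have hS := regionArea_pos hα.2
  have hP := regionCost_pos hr hα
  set x := f / (R ^ 2 * regionArea α)
  set y := κ * f * R * regionCost r α / (2 * regionArea α)
  have hxy : x * y ^ 2 = κ ^ 2 * f ^ 3 * regionCostRatio r α / 4 := by
    simp only [x, y, regionCostRatio]
    field_simp
    ring
  have hcost : N * f / A + κ * f * N / A *
      ((2 / 3) * R ^ 3 * cos α ^ 3 * (∫ t in (-α)..α, 1 / cos t ^ 3)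
        + (2 / 3) * (π - 2 * α) * R ^ 3 + 2 * r * R * (A / N) * cos α) = x + 2 * y := by
    rw [integral_one_div_cos_pow_three_neg_self hα.1.le hα.2, ← hcon]
    simp only [x, y, regionCost, regionArea] at hS ⊢
    field_simp
  rw [← hxy, hcost]
  exact three_mul_rpow_mul_sq_le_add_two_mul (by positivity) (by positivity)

theorem stmt_16_general (f κ r : ℝ) (hf : 0 < f) (hκ : 0 < κ) (hr : 0 ≤ r)
    (αs : ℝ) (hmem : αs ∈ Set.Ioo 0 (π/2))
    (hroot : sin αs - cos αs ^ 2 * log (tan (π/4 + αs/2))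
        - r * sin (2*αs) - r * (π - 2*αs) = 0)
    (N A R α : ℝ) (hN : 0 < N) (hR : 0 < R) (hα : α ∈ Set.Ioo 0 (π/2))
    (hcon : N * R^2 * (sin (2*α) + π - 2*α) = A) :
    3 * (κ^2 * f^3 /
        (4 * (3 * (sin (2*αs) + π - 2*αs) ^ ((1:ℝ)/2) / (2 + 4*r*cos αs)) ^ 2)) ^ ((1:ℝ)/3)
      ≤ N * f / A + κ * f * N / A *
          ((2/3) * R^3 * cos α ^ 3 * (∫ t in (-α)..α, 1 / cos t ^ 3)
            + (2/3) * (π - 2*α) * R^3 + 2 * r * R * (A/N) * cos α) := by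
  have hcos : cos αs ≠ 0 := (cos_pos_of_mem_Ioo ⟨by linarith [pi_pos, hmem.1], hmem.2⟩).ne'
  have hE : stationarity r αs = 0 := by
    rw [stationarity, regionArea, invGudermannian_eq_log_tan hcos]
    linear_combination hroot
  have hH := regionCostRatio_eq_of_stationarity_eq_zero (regionArea_pos hmem.2) hE
  calc _ = 3 * (κ ^ 2 * f ^ 3 * regionCostRatio r αs / 4) ^ (1 / 3 : ℝ) := by
        rw [hH, regionArea]
        ring_nf
    _ ≤ 3 * (κ ^ 2 * f ^ 3 * regionCostRatio r α / 4) ^ (1 / 3 : ℝ) := by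
        have hHpos : 0 ≤ regionCostRatio r αs := by rw [hH]; positivity
        gcongr
        exact isMinOn_regionCostRatio hr hmem hE hα
    _ ≤ _ := rpow_regionCostRatio_le_cost hf.le hκ.le hr hN.ne' hR hα hcon

theorem stmt_16 (f κ r : ℝ) (hf : 0 < f) (hκ : 0 < κ) (hr : 0 ≤ r)
    (αs : ℝ) (hmem : αs ∈ Set.Ioo 0 (π/2))
    (hroot : sin αs - cos αs ^ 2 * log (tan (π/4 + αs/2))
        - r * sin (2*αs) - r * (π - 2*αs) = 0)
    (N A R α : ℝ) (hN : 0 < N) (hA : 0 < A) (hR : 0 < R) (hα : α ∈ Set.Ioo 0 (π/2))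
    (hcon : N * R^2 * (sin (2*α) + π - 2*α) = A) :
    3 * (κ^2 * f^3 /
        (4 * (3 * (sin (2*αs) + π - 2*αs) ^ ((1:ℝ)/2) / (2 + 4*r*cos αs)) ^ 2)) ^ ((1:ℝ)/3)
      ≤ N * f / A + κ * f * N / A *
          ((2/3) * R^3 * cos α ^ 3 * (∫ t in (-α)..α, 1 / cos t ^ 3)
            + (2/3) * (π - 2*α) * R^3 + 2 * r * R * (A/N) * cos α) :=
  stmt_16_general f κ r hf hκ hr αs hmem hroot N A R α hN hR hα hcon
end
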